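/- arXiv:1210.7520 — 3 statements merged into one kernel-verified Lean document; each statement's English description precedes it below -/
import Mathlib

section
/- Let γ₁(t) = (t,0) and let γ₂(s) = p + s·v be a straight line in ℝ² with |v| = 1, which is distinct from the x₁-axis and intersects it at the point γ₂(s₀) = (a,0) with a ≠ 0 (i.e., γ₁(t₀) = (a,0) with t₀ = a). Let φ(t,s) = |γ₁(t) − γ₂(s)|. Then ∂²φ/∂t∂s (t,s) ≠ 0 whenever t ≠ t₀ and s ≠ s₀. -/
/-!
Write `γ₂(s) = (X s, Y s)`, so `φ(t,s) = √((t - X s)² + (Y s)²)`. Then `∂φ/∂t = (t - X)/φ` and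
differentiating in `s` gives `∂²φ/∂t∂s = -Y (X' Y + (t - X) Y') / φ³`. For the line through `(a,0)`
we have `Y s = (s - s₀) v₂` and `X' Y + (t - X) Y' = v₂ (t - a)`, so the mixed derivative is
`-(s - s₀) v₂² (t - a) / φ³`, which vanishes only on `s = s₀` or `t = a`.
-/

lemma deriv_sqrt_sub_sq_add_sq {x y : ℝ} (t : ℝ) (h : (t - x) ^ 2 + y ^ 2 ≠ 0) :
    deriv (fun t' : ℝ => √((t' - x) ^ 2 + y ^ 2)) t = (t - x) / √((t - x) ^ 2 + y ^ 2) := by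
  have hg : HasDerivAt (fun t' : ℝ => (t' - x) ^ 2 + y ^ 2) (2 * (t - x)) t := by
    simpa [mul_comm] using (((hasDerivAt_id t).sub_const x).pow 2).add_const (y ^ 2)
  rw [(hg.sqrt h).deriv, mul_div_mul_left _ _ two_ne_zero]

lemma hasDerivAt_deriv_sqrt_sub_sq_add_sq {X Y : ℝ → ℝ} {X' Y' s : ℝ} (t : ℝ)
    (hX : HasDerivAt X X' s) (hY : HasDerivAt Y Y' s) (hYs : Y s ≠ 0) :
    HasDerivAt (fun s' : ℝ => deriv (fun t' : ℝ => √((t' - X s') ^ 2 + Y s' ^ 2)) t)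
      (-(Y s * (X' * Y s + (t - X s) * Y')) / √((t - X s) ^ 2 + Y s ^ 2) ^ 3) s := by
  have hinner : (fun s' : ℝ => deriv (fun t' : ℝ => √((t' - X s') ^ 2 + Y s' ^ 2)) t)
      =ᶠ[nhds s] fun s' => (t - X s') / √((t - X s') ^ 2 + Y s' ^ 2) := by
    filter_upwards [hY.continuousAt.eventually_ne hYs] with s' hs'
    exact deriv_sqrt_sub_sq_add_sq t (by positivity)
  have hpos : 0 < (t - X s) ^ 2 + Y s ^ 2 := by positivity
  have hq : 0 < √((t - X s) ^ 2 + Y s ^ 2) := Real.sqrt_pos.mpr hpos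
  have hq2 : √((t - X s) ^ 2 + Y s ^ 2) ^ 2 = (t - X s) ^ 2 + Y s ^ 2 := Real.sq_sqrt hpos.le
  have hnum := hX.const_sub t
  have hden := ((hnum.fun_pow 2).fun_add (hY.fun_pow 2)).sqrt hpos.ne'
  refine ((hnum.div hden hq.ne').congr_of_eventuallyEq hinner).congr_deriv ?_
  field_simp
  linear_combination (-2 * X') * hq2

theorem stmt_7_general (p₁ p₂ v₁ v₂ a s₀ : ℝ)
    (hv₂ : v₂ ≠ 0)
    (hs₀ : p₁ + s₀ * v₁ = a ∧ p₂ + s₀ * v₂ = 0) :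
    ∀ t s : ℝ, t ≠ a → s ≠ s₀ →
      deriv (fun s' : ℝ =>
        deriv (fun t' : ℝ =>
          Real.sqrt ((t' - (p₁ + s' * v₁)) ^ 2 + (p₂ + s' * v₂) ^ 2)) t) s ≠ 0 := by
  obtain ⟨hx₀, hy₀⟩ := hs₀
  intro t s ht hs
  have hy_eq : p₂ + s * v₂ = (s - s₀) * v₂ := by linear_combination hy₀
  have hcross : v₁ * (p₂ + s * v₂) + (t - (p₁ + s * v₁)) * v₂ = v₂ * (t - a) := by
    linear_combination v₁ * hy₀ - v₂ * hx₀
  have hy : p₂ + s * v₂ ≠ 0 := hy_eq ▸ mul_ne_zero (sub_ne_zero.mpr hs) hv₂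
  have hx' : HasDerivAt (fun s' : ℝ => p₁ + s' * v₁) v₁ s := by
    simpa using ((hasDerivAt_id s).mul_const v₁).const_add p₁
  have hy' : HasDerivAt (fun s' : ℝ => p₂ + s' * v₂) v₂ s := by
    simpa using ((hasDerivAt_id s).mul_const v₂).const_add p₂
  rw [(hasDerivAt_deriv_sqrt_sub_sq_add_sq t hx' hy' hy).deriv, hcross]
  have hφ : 0 < √((t - (p₁ + s * v₁)) ^ 2 + (p₂ + s * v₂) ^ 2) :=
    Real.sqrt_pos.mpr (by positivity)
  exact div_ne_zero (neg_ne_zero.mpr (mul_ne_zero hy (mul_ne_zero hv₂ (sub_ne_zero.mpr ht))))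
    (pow_ne_zero 3 hφ.ne')

/-- Intersecting-lines case of Lemma 3.2 in the Euclidean plane: `γ₁(t) = (t,0)` and a
unit-speed line `γ₂(s) = p + s v` distinct from the `x₁`-axis meeting it at
`γ₂(s₀) = (a,0)`, `a ≠ 0`.  Then `∂²φ/∂t∂s ≠ 0` off the lines `t = a`, `s = s₀`. -/
theorem stmt_7 (p₁ p₂ v₁ v₂ a s₀ : ℝ)
    (hv : v₁ ^ 2 + v₂ ^ 2 = 1) (hv₂ : v₂ ≠ 0)
    (hs₀ : p₁ + s₀ * v₁ = a ∧ p₂ + s₀ * v₂ = 0) (ha : a ≠ 0) :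
    ∀ t s : ℝ, t ≠ a → s ≠ s₀ →
      deriv (fun s' : ℝ =>
        deriv (fun t' : ℝ =>
          Real.sqrt ((t' - (p₁ + s' * v₁)) ^ 2 + (p₂ + s' * v₂) ^ 2)) t) s ≠ 0 :=
  stmt_7_general p₁ p₂ v₁ v₂ a s₀ hv₂ hs₀
end

section
/- Let γ₁(t) = (t,0) and γ₂(s) = (a, 0) + s·v be a line in ℝ² with |v| = 1, v not parallel to (1,0), intersecting the x₁-axis at γ₂(s₀) with s₀ determined by the second coordinate vanishing, and assume the intersection point is not the origin. Let φ(t,s) = |γ₁(t) − γ₂(s)| and Π(t,s) = (t, ∂φ/∂t(t,s)). Then for t with γ₁(t) not equal to the intersection point, the Jacobian determinant of Π vanishes exactly when s = s₀, and at such points ∂³φ/∂t∂s² ≠ 0 (so Π has a fold singularity along {s = s₀}). -/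
/-!
With `u = t - a - s v₁` and `w = s v₂` the coordinates of `γ₁(t) - γ₂(s)`, one has
`φ'_t = u / √(u² + w²)`, and differentiating in `s` gives
`φ''_{ts} = w (u' w - u w') / (u² + w²)^{3/2} = s · h(s)` with
`h(s) = -v₂² (t - a) / (u² + w²)^{3/2}`, which never vanishes when `v₂ ≠ 0` and `t ≠ a`.
Hence `φ''_{ts}` vanishes exactly at `s = 0`, and its `s`-derivative there is `h(0) ≠ 0`.
-/

theorem HasDerivAt.sqrt_sq_add_sq {u w : ℝ → ℝ} {u' w' x : ℝ} (hu : HasDerivAt u u' x)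
    (hw : HasDerivAt w w' x) (hne : u x ^ 2 + w x ^ 2 ≠ 0) :
    HasDerivAt (fun y => √(u y ^ 2 + w y ^ 2))
      ((u x * u' + w x * w') / √(u x ^ 2 + w x ^ 2)) x := by
  have hr : √(u x ^ 2 + w x ^ 2) ≠ 0 := by positivity
  refine ((hu.fun_pow 2).fun_add (hw.fun_pow 2)).sqrt hne |>.congr_deriv ?_
  field_simp
  ring

theorem HasDerivAt.div_sqrt_sq_add_sq {u w : ℝ → ℝ} {u' w' x : ℝ} (hu : HasDerivAt u u' x)
    (hw : HasDerivAt w w' x) (hpos : 0 < u x ^ 2 + w x ^ 2) :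
    HasDerivAt (fun y => u y / √(u y ^ 2 + w y ^ 2))
      (w x * (u' * w x - u x * w') / ((u x ^ 2 + w x ^ 2) * √(u x ^ 2 + w x ^ 2))) x := by
  have hr : √(u x ^ 2 + w x ^ 2) ≠ 0 := (Real.sqrt_pos.mpr hpos).ne'
  refine (hu.div (hu.sqrt_sq_add_sq hw hpos.ne') hr).congr_deriv ?_
  field_simp
  rw [Real.sq_sqrt hpos.le]
  ring

theorem hasDerivAt_sub_mul_of_continuousAt {h : ℝ → ℝ} {x₀ : ℝ} (hc : ContinuousAt h x₀) :
    HasDerivAt (fun x => (x - x₀) * h x) (h x₀) x₀ := by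
  rw [hasDerivAt_iff_tendsto_slope]
  refine (hc.tendsto.mono_left nhdsWithin_le_nhds).congr' ?_
  filter_upwards [self_mem_nhdsWithin] with x hx
  rw [slope_def_field, sub_self, zero_mul, sub_zero, mul_div_cancel_left₀ _ (sub_ne_zero.mpr hx)]

theorem stmt_8_general (v₁ v₂ a : ℝ) (hv₂ : v₂ ≠ 0) :
    ∀ t : ℝ, t ≠ a →
      (∀ s : ℝ,
        deriv (fun s' : ℝ =>
          deriv (fun t' : ℝ =>
            Real.sqrt ((t' - (a + s' * v₁)) ^ 2 + (s' * v₂) ^ 2)) t) s = 0 ↔ s = 0) ∧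
      deriv (fun s : ℝ =>
        deriv (fun s' : ℝ =>
          deriv (fun t' : ℝ =>
            Real.sqrt ((t' - (a + s' * v₁)) ^ 2 + (s' * v₂) ^ 2)) t) s) 0 ≠ 0 := by
  intro t ht
  have hta : t - a ≠ 0 := sub_ne_zero.mpr ht
  have hpos (s : ℝ) : 0 < (t - (a + s * v₁)) ^ 2 + (s * v₂) ^ 2 := by
    rcases eq_or_ne s 0 with rfl | hs
    · simpa using sq_pos_of_ne_zero hta
    · have : s * v₂ ≠ 0 := mul_ne_zero hs hv₂
      positivity
  have hden (s : ℝ) : ((t - (a + s * v₁)) ^ 2 + (s * v₂) ^ 2) *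
      √((t - (a + s * v₁)) ^ 2 + (s * v₂) ^ 2) ≠ 0 :=
    (mul_pos (hpos s) (Real.sqrt_pos.mpr (hpos s))).ne'
  set h : ℝ → ℝ := fun s => -(v₂ ^ 2 * (t - a)) / (((t - (a + s * v₁)) ^ 2 + (s * v₂) ^ 2) *
    √((t - (a + s * v₁)) ^ 2 + (s * v₂) ^ 2)) with h_def
  have hh (s : ℝ) : h s ≠ 0 :=
    div_ne_zero (neg_ne_zero.mpr (mul_ne_zero (pow_ne_zero 2 hv₂) hta)) (hden s)
  have hφt : (fun s' : ℝ => deriv (fun t' : ℝ =>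
        √((t' - (a + s' * v₁)) ^ 2 + (s' * v₂) ^ 2)) t)
      = fun s' => (t - (a + s' * v₁)) / √((t - (a + s' * v₁)) ^ 2 + (s' * v₂) ^ 2) := by
    funext s
    refine (((hasDerivAt_id' t).sub_const _).sqrt_sq_add_sq (hasDerivAt_const t (s * v₂))
      (hpos s).ne').deriv.trans ?_
    ring
  have hφts : (fun s => deriv (fun s' : ℝ => deriv (fun t' : ℝ =>
        √((t' - (a + s' * v₁)) ^ 2 + (s' * v₂) ^ 2)) t) s) = fun s => (s - 0) * h s := by
    funext s
    rw [hφt]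
    refine ((((hasDerivAt_id' s).mul_const v₁).const_add a).const_sub t |>.div_sqrt_sq_add_sq
      ((hasDerivAt_id' s).mul_const v₂) (hpos s)).deriv.trans ?_
    simp only [h_def]
    ring
  refine ⟨fun s => ?_, ?_⟩
  · rw [congrFun hφts s, mul_eq_zero, sub_zero]
    simp [hh s]
  · rw [hφts, (hasDerivAt_sub_mul_of_continuousAt ?_).deriv]
    · exact hh 0
    · exact continuousAt_const.div (by fun_prop) (hden 0)

/-- Euclidean model of the fold statement in Lemma 3.2: for `γ₁(t) = (t,0)` and the line
`γ₂(s) = (a + s v₁, s v₂)` with `v₂ ≠ 0`, `a ≠ 0`, the Jacobian determinant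
`φ''_{ts}` of `Π(t,s) = (t, φ'_t(t,s))` vanishes exactly at `s = 0`, where moreover
`φ'''_{tss} ≠ 0` (so `Π` has a fold along `{s = 0}`). -/
theorem stmt_8 (v₁ v₂ a : ℝ) (hv : v₁ ^ 2 + v₂ ^ 2 = 1) (hv₂ : v₂ ≠ 0) (ha : a ≠ 0) :
    ∀ t : ℝ, t ≠ a →
      (∀ s : ℝ,
        deriv (fun s' : ℝ =>
          deriv (fun t' : ℝ =>
            Real.sqrt ((t' - (a + s' * v₁)) ^ 2 + (s' * v₂) ^ 2)) t) s = 0 ↔ s = 0) ∧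
      deriv (fun s : ℝ =>
        deriv (fun s' : ℝ =>
          deriv (fun t' : ℝ =>
            Real.sqrt ((t' - (a + s' * v₁)) ^ 2 + (s' * v₂) ^ 2)) t) s) 0 ≠ 0 :=
  stmt_8_general v₁ v₂ a hv₂
end

section
/- Let γ₁, γ₂ : ℝ → ℝ³ be two distinct straight lines parameterized by arclength (γᵢ(t) = pᵢ + t vᵢ, |vᵢ| = 1, the lines not equal as sets), and let φ(t,s) = |γ₁(t) − γ₂(s)|. Then there is at most one point (t₀,s₀) such that at every (t,s) with φ(t,s) ≠ 0 and (t,s) ≠ (t₀,s₀), at least one of ∂²φ/∂t∂s, ∂³φ/∂t²∂s, ∂³φ/∂t∂s² is nonzero. -/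
/-!
Write `D(t,s) = γ₁(t) - γ₂(s)`. Then `∂ₜφ = ⟪D, v₁⟫ / φ` and `∂ₛ∂ₜφ = N / φ³` with
`N = ⟪D, v₁⟫⟪D, v₂⟫ - ⟪v₁, v₂⟫ φ²`. Where `N` vanishes, the two third derivatives are just
`∂ₜN / φ³` and `∂ₛN / φ³`, where `∂ₜN = ‖v₁‖²⟪D, v₂⟫ - ⟪v₁, v₂⟫⟪D, v₁⟫` and
`∂ₛN = ⟪v₁, v₂⟫⟪D, v₂⟫ - ‖v₂‖²⟪D, v₁⟫`.

For parallel lines, `N = 0` is the equality case of Cauchy–Schwarz for `D` and `v₁`, so `D ∥ v₁`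
and the lines coincide. Otherwise the linear system `∂ₜN = ∂ₛN = 0` in `⟪D, v₁⟫, ⟪D, v₂⟫` has
determinant `‖v₁‖²‖v₂‖² - ⟪v₁, v₂⟫² ≠ 0`, so `D ⊥ v₁, v₂`; then `N = -⟪v₁, v₂⟫ φ²` forces
`v₁ ⊥ v₂`. So an exceptional point exists only for perpendicular lines, and it is the pair of
feet of their common perpendicular, `t₀ = -⟪p₁ - p₂, v₁⟫ / ‖v₁‖²`, `s₀ = ⟪p₁ - p₂, v₂⟫ / ‖v₂‖²`.
-/

open Filter Topology
open scoped RealInnerProductSpace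

theorem HasDerivAt.norm {F : Type*} [NormedAddCommGroup F] [InnerProductSpace ℝ F] {f : ℝ → F}
    {f' : F} {x : ℝ} (hf : HasDerivAt f f' x) (h0 : f x ≠ 0) :
    HasDerivAt (fun y => ‖f y‖) (⟪f x, f'⟫ / ‖f x‖) x := by
  have hsq : ‖f x‖ ^ 2 ≠ 0 := by positivity
  have h := hf.norm_sq.sqrt hsq
  simp only [Real.sqrt_sq (norm_nonneg _)] at h
  convert h using 1
  ring

theorem HasDerivAt.div_of_eq_zero {f g : ℝ → ℝ} {f' g' x : ℝ} (hf : HasDerivAt f f' x)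
    (hg : HasDerivAt g g' x) (hgx : g x ≠ 0) (hfx : f x = 0) :
    HasDerivAt (fun y => f y / g y) (f' / g x) x := by
  refine (hf.div hg hgx).congr_deriv ?_
  rw [hfx, zero_mul, sub_zero]
  field_simp

section

variable {E : Type*} [NormedAddCommGroup E] [InnerProductSpace ℝ E] (p₁ v₁ p₂ v₂ : E)

def lineGap (t s : ℝ) : E := (p₁ + t • v₁) - (p₂ + s • v₂)

def mixedPartialNum (t s : ℝ) : ℝ :=
  ⟪lineGap p₁ v₁ p₂ v₂ t s, v₁⟫ * ⟪lineGap p₁ v₁ p₂ v₂ t s, v₂⟫ -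
    ⟪v₁, v₂⟫ * ‖lineGap p₁ v₁ p₂ v₂ t s‖ ^ 2

variable {p₁ v₁ p₂ v₂}

theorem inner_lineGap (t s : ℝ) (u : E) :
    ⟪lineGap p₁ v₁ p₂ v₂ t s, u⟫ = ⟪p₁ - p₂, u⟫ + t * ⟪v₁, u⟫ - s * ⟪v₂, u⟫ := by
  simp only [lineGap, inner_sub_left, inner_add_left, real_inner_smul_left]
  ring

theorem hasDerivAt_lineGap_fst (t s : ℝ) :
    HasDerivAt (fun t => lineGap p₁ v₁ p₂ v₂ t s) v₁ t :=
  ((((hasDerivAt_id t).smul_const v₁).const_add p₁).sub_const (p₂ + s • v₂)).congr_deriv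
    (one_smul ℝ v₁)

theorem hasDerivAt_lineGap_snd (t s : ℝ) :
    HasDerivAt (fun s => lineGap p₁ v₁ p₂ v₂ t s) (-v₂) s :=
  ((((hasDerivAt_id s).smul_const v₂).const_add p₂).const_sub (p₁ + t • v₁)).congr_deriv
    (by rw [one_smul])

theorem hasDerivAt_mixedPartialNum_fst (t s : ℝ) :
    HasDerivAt (fun t => mixedPartialNum p₁ v₁ p₂ v₂ t s)
      (‖v₁‖ ^ 2 * ⟪lineGap p₁ v₁ p₂ v₂ t s, v₂⟫ - ⟪v₁, v₂⟫ * ⟪lineGap p₁ v₁ p₂ v₂ t s, v₁⟫) t := by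
  have hD := hasDerivAt_lineGap_fst (p₁ := p₁) (v₁ := v₁) (p₂ := p₂) (v₂ := v₂) t s
  refine (((hD.inner ℝ (hasDerivAt_const t v₁)).mul (hD.inner ℝ (hasDerivAt_const t v₂))).sub
    (hD.norm_sq.const_mul _)).congr_deriv ?_
  simp only [inner_zero_right, zero_add, real_inner_self_eq_norm_sq]
  ring

theorem hasDerivAt_mixedPartialNum_snd (t s : ℝ) :
    HasDerivAt (fun s => mixedPartialNum p₁ v₁ p₂ v₂ t s)
      (⟪v₁, v₂⟫ * ⟪lineGap p₁ v₁ p₂ v₂ t s, v₂⟫ - ‖v₂‖ ^ 2 * ⟪lineGap p₁ v₁ p₂ v₂ t s, v₁⟫) s := by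
  have hD := hasDerivAt_lineGap_snd (p₁ := p₁) (v₁ := v₁) (p₂ := p₂) (v₂ := v₂) t s
  refine (((hD.inner ℝ (hasDerivAt_const s v₁)).mul (hD.inner ℝ (hasDerivAt_const s v₂))).sub
    (hD.norm_sq.const_mul _)).congr_deriv ?_
  simp only [inner_zero_right, zero_add, inner_neg_left, inner_neg_right,
    real_inner_self_eq_norm_sq, real_inner_comm v₁ v₂]
  ring

theorem hasDerivAt_inner_div_norm_lineGap_snd {t s : ℝ} (hD : lineGap p₁ v₁ p₂ v₂ t s ≠ 0) :
    HasDerivAt (fun s => ⟪lineGap p₁ v₁ p₂ v₂ t s, v₁⟫ / ‖lineGap p₁ v₁ p₂ v₂ t s‖)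
      (mixedPartialNum p₁ v₁ p₂ v₂ t s / ‖lineGap p₁ v₁ p₂ v₂ t s‖ ^ 3) s := by
  have hG := hasDerivAt_lineGap_snd (p₁ := p₁) (v₁ := v₁) (p₂ := p₂) (v₂ := v₂) t s
  have hn : ‖lineGap p₁ v₁ p₂ v₂ t s‖ ≠ 0 := norm_ne_zero_iff.mpr hD
  refine ((hG.inner ℝ (hasDerivAt_const s v₁)).div (hG.norm hD) hn).congr_deriv ?_
  simp only [mixedPartialNum, inner_zero_right, zero_add, inner_neg_left, inner_neg_right,
    real_inner_comm v₁ v₂]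
  field_simp
  ring

theorem eventually_lineGap_ne_zero_fst {t s : ℝ} (hD : lineGap p₁ v₁ p₂ v₂ t s ≠ 0) :
    ∀ᶠ t' in 𝓝 t, lineGap p₁ v₁ p₂ v₂ t' s ≠ 0 :=
  (hasDerivAt_lineGap_fst t s).continuousAt.eventually_ne hD

theorem eventually_lineGap_ne_zero_snd {t s : ℝ} (hD : lineGap p₁ v₁ p₂ v₂ t s ≠ 0) :
    ∀ᶠ s' in 𝓝 s, lineGap p₁ v₁ p₂ v₂ t s' ≠ 0 :=
  (hasDerivAt_lineGap_snd t s).continuousAt.eventually_ne hD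

theorem deriv_deriv_norm_lineGap {t s : ℝ} (hD : lineGap p₁ v₁ p₂ v₂ t s ≠ 0) :
    deriv (fun s' => deriv (fun t' => ‖lineGap p₁ v₁ p₂ v₂ t' s'‖) t) s =
      mixedPartialNum p₁ v₁ p₂ v₂ t s / ‖lineGap p₁ v₁ p₂ v₂ t s‖ ^ 3 := by
  have h : (fun s' => deriv (fun t' => ‖lineGap p₁ v₁ p₂ v₂ t' s'‖) t) =ᶠ[𝓝 s]
      fun s' => ⟪lineGap p₁ v₁ p₂ v₂ t s', v₁⟫ / ‖lineGap p₁ v₁ p₂ v₂ t s'‖ :=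
    (eventually_lineGap_ne_zero_snd hD).mono fun s' h =>
      ((hasDerivAt_lineGap_fst t s').norm h).deriv
  rw [h.deriv_eq, (hasDerivAt_inner_div_norm_lineGap_snd hD).deriv]

theorem deriv_fst_deriv_deriv_norm_lineGap {t s : ℝ} (hD : lineGap p₁ v₁ p₂ v₂ t s ≠ 0)
    (hN : mixedPartialNum p₁ v₁ p₂ v₂ t s = 0) :
    deriv (fun t' => deriv (fun s' => deriv (fun t'' => ‖lineGap p₁ v₁ p₂ v₂ t'' s'‖) t') s) t =
      (‖v₁‖ ^ 2 * ⟪lineGap p₁ v₁ p₂ v₂ t s, v₂⟫ - ⟪v₁, v₂⟫ * ⟪lineGap p₁ v₁ p₂ v₂ t s, v₁⟫) /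
        ‖lineGap p₁ v₁ p₂ v₂ t s‖ ^ 3 := by
  have h : (fun t' => deriv (fun s' => deriv (fun t'' => ‖lineGap p₁ v₁ p₂ v₂ t'' s'‖) t') s)
      =ᶠ[𝓝 t] fun t' => mixedPartialNum p₁ v₁ p₂ v₂ t' s / ‖lineGap p₁ v₁ p₂ v₂ t' s‖ ^ 3 :=
    (eventually_lineGap_ne_zero_fst hD).mono fun _ h => deriv_deriv_norm_lineGap h
  rw [h.deriv_eq, ((hasDerivAt_mixedPartialNum_fst t s).div_of_eq_zero
    (((hasDerivAt_lineGap_fst t s).norm hD).fun_pow 3) (by positivity) hN).deriv]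

theorem deriv_snd_deriv_deriv_norm_lineGap {t s : ℝ} (hD : lineGap p₁ v₁ p₂ v₂ t s ≠ 0)
    (hN : mixedPartialNum p₁ v₁ p₂ v₂ t s = 0) :
    deriv (fun s' => deriv (fun s'' => deriv (fun t' => ‖lineGap p₁ v₁ p₂ v₂ t' s''‖) t) s') s =
      (⟪v₁, v₂⟫ * ⟪lineGap p₁ v₁ p₂ v₂ t s, v₂⟫ - ‖v₂‖ ^ 2 * ⟪lineGap p₁ v₁ p₂ v₂ t s, v₁⟫) /
        ‖lineGap p₁ v₁ p₂ v₂ t s‖ ^ 3 := by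
  have h : (fun s' => deriv (fun s'' => deriv (fun t' => ‖lineGap p₁ v₁ p₂ v₂ t' s''‖) t) s')
      =ᶠ[𝓝 s] fun s' => mixedPartialNum p₁ v₁ p₂ v₂ t s' / ‖lineGap p₁ v₁ p₂ v₂ t s'‖ ^ 3 :=
    (eventually_lineGap_ne_zero_snd hD).mono fun _ h => deriv_deriv_norm_lineGap h
  rw [h.deriv_eq, ((hasDerivAt_mixedPartialNum_snd t s).div_of_eq_zero
    (((hasDerivAt_lineGap_snd t s).norm hD).fun_pow 3) (by positivity) hN).deriv]

theorem range_add_smul_eq {p q v : E} {m r : ℝ} (hr : r ≠ 0) (h : p - q = m • v) :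
    Set.range (fun t : ℝ => p + t • v) = Set.range (fun s : ℝ => q + s • (r • v)) := by
  rw [sub_eq_iff_eq_add'] at h
  ext x
  constructor
  · rintro ⟨t, rfl⟩
    refine ⟨(m + t) / r, ?_⟩
    dsimp only
    rw [h, smul_smul, div_mul_cancel₀ _ hr]
    module
  · rintro ⟨s, rfl⟩
    refine ⟨s * r - m, ?_⟩
    dsimp only
    rw [h, smul_smul]
    module

theorem range_eq_of_mixedPartialNum_eq_zero {t s : ℝ} (hv₁ : v₁ ≠ 0) (hv₂ : v₂ ≠ 0)
    (hpar : ⟪v₁, v₂⟫ ^ 2 = ‖v₁‖ ^ 2 * ‖v₂‖ ^ 2) (hD : lineGap p₁ v₁ p₂ v₂ t s ≠ 0)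
    (hN : mixedPartialNum p₁ v₁ p₂ v₂ t s = 0) :
    Set.range (fun t : ℝ => p₁ + t • v₁) = Set.range (fun s : ℝ => p₂ + s • v₂) := by
  obtain ⟨r, hr, rfl⟩ : ∃ r : ℝ, r ≠ 0 ∧ v₂ = r • v₁ := by
    refine (norm_inner_eq_norm_iff hv₁ hv₂).mp ?_
    rw [Real.norm_eq_abs, ← abs_of_nonneg (by positivity : 0 ≤ ‖v₁‖ * ‖v₂‖),
      ← sq_eq_sq_iff_abs_eq_abs, hpar, mul_pow]
  set D := lineGap p₁ v₁ p₂ (r • v₁) t s with hD_def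
  have hCS : ‖⟪D, v₁⟫‖ = ‖D‖ * ‖v₁‖ := by
    have h : r * (⟪D, v₁⟫ ^ 2 - (‖D‖ * ‖v₁‖) ^ 2) = 0 := by
      rw [← hN, mixedPartialNum, ← hD_def]
      simp only [inner_smul_right, real_inner_self_eq_norm_sq]
      ring
    rw [Real.norm_eq_abs, ← abs_of_nonneg (by positivity : 0 ≤ ‖D‖ * ‖v₁‖),
      ← sq_eq_sq_iff_abs_eq_abs]
    linear_combination ((mul_eq_zero.mp h).resolve_left hr)
  obtain ⟨μ, hμ, hv⟩ := (norm_inner_eq_norm_iff hD hv₁).mp hCS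
  have hD' : D = μ⁻¹ • v₁ := by rw [hv, smul_smul, inv_mul_cancel₀ hμ, one_smul]
  rw [hD_def, lineGap] at hD'
  exact range_add_smul_eq (m := μ⁻¹ - t + s * r) hr (by linear_combination (norm := module) hD')

theorem eq_foot_of_mixedPartialNum_eq_zero {t s : ℝ} (hv₁ : v₁ ≠ 0) (hv₂ : v₂ ≠ 0)
    (hpar : ⟪v₁, v₂⟫ ^ 2 ≠ ‖v₁‖ ^ 2 * ‖v₂‖ ^ 2) (hD : lineGap p₁ v₁ p₂ v₂ t s ≠ 0)
    (hN : mixedPartialNum p₁ v₁ p₂ v₂ t s = 0)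
    (hNt :
      ‖v₁‖ ^ 2 * ⟪lineGap p₁ v₁ p₂ v₂ t s, v₂⟫ - ⟪v₁, v₂⟫ * ⟪lineGap p₁ v₁ p₂ v₂ t s, v₁⟫ = 0)
    (hNs :
      ⟪v₁, v₂⟫ * ⟪lineGap p₁ v₁ p₂ v₂ t s, v₂⟫ - ‖v₂‖ ^ 2 * ⟪lineGap p₁ v₁ p₂ v₂ t s, v₁⟫ = 0) :
    t = -⟪p₁ - p₂, v₁⟫ / ‖v₁‖ ^ 2 ∧ s = ⟪p₁ - p₂, v₂⟫ / ‖v₂‖ ^ 2 := by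
  have ha : ‖v₁‖ ^ 2 ≠ 0 := by positivity
  have hx : ⟪lineGap p₁ v₁ p₂ v₂ t s, v₁⟫ = 0 := by
    have h : (‖v₁‖ ^ 2 * ‖v₂‖ ^ 2 - ⟪v₁, v₂⟫ ^ 2) * ⟪lineGap p₁ v₁ p₂ v₂ t s, v₁⟫ = 0 := by
      linear_combination ⟪v₁, v₂⟫ * hNt - ‖v₁‖ ^ 2 * hNs
    exact (mul_eq_zero.mp h).resolve_left (sub_ne_zero.mpr hpar.symm)
  have hy : ⟪lineGap p₁ v₁ p₂ v₂ t s, v₂⟫ = 0 := by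
    have h : ‖v₁‖ ^ 2 * ⟪lineGap p₁ v₁ p₂ v₂ t s, v₂⟫ = 0 := by
      linear_combination hNt + ⟪v₁, v₂⟫ * hx
    exact (mul_eq_zero.mp h).resolve_left ha
  have hc : ⟪v₁, v₂⟫ = 0 := by
    have h : ⟪v₁, v₂⟫ * ‖lineGap p₁ v₁ p₂ v₂ t s‖ ^ 2 = 0 := by
      rw [mixedPartialNum, hx, hy] at hN
      linear_combination -hN
    exact (mul_eq_zero.mp h).resolve_right (by positivity)
  rw [inner_lineGap, real_inner_self_eq_norm_sq, real_inner_comm v₁ v₂, hc] at hx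
  rw [inner_lineGap, real_inner_self_eq_norm_sq, hc] at hy
  constructor
  · field_simp
    linear_combination hx
  · field_simp
    linear_combination -hy

end

/-- Zero-curvature case of Lemma 4.1: for two distinct unit-speed lines
`γᵢ(t) = pᵢ + t vᵢ` in Euclidean `ℝ³` and `φ(t,s) = |γ₁(t) - γ₂(s)|`, there is at most
one point `(t₀,s₀)` off of which (where `φ ≠ 0`) at least one of `φ''_{ts}`,
`φ'''_{tts}`, `φ'''_{tss}` is nonzero. -/
theorem stmt_12 (p₁ p₂ v₁ v₂ : EuclideanSpace ℝ (Fin 3))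
    (hv₁ : ‖v₁‖ = 1) (hv₂ : ‖v₂‖ = 1)
    (hdist : Set.range (fun t : ℝ => p₁ + t • v₁) ≠
      Set.range (fun s : ℝ => p₂ + s • v₂)) :
    ∃ t₀ s₀ : ℝ, ∀ t s : ℝ,
      ‖(p₁ + t • v₁) - (p₂ + s • v₂)‖ ≠ 0 → (t, s) ≠ (t₀, s₀) →
      (deriv (fun s' : ℝ =>
          deriv (fun t' : ℝ => ‖(p₁ + t' • v₁) - (p₂ + s' • v₂)‖) t) s ≠ 0 ∨
        deriv (fun t' : ℝ =>
          deriv (fun s' : ℝ =>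
            deriv (fun t'' : ℝ => ‖(p₁ + t'' • v₁) - (p₂ + s' • v₂)‖) t') s) t ≠ 0 ∨
        deriv (fun s' : ℝ =>
          deriv (fun s'' : ℝ =>
            deriv (fun t' : ℝ => ‖(p₁ + t' • v₁) - (p₂ + s'' • v₂)‖) t) s') s ≠ 0) := by
  have hv₁0 : v₁ ≠ 0 := norm_ne_zero_iff.mp (by simp [hv₁])
  have hv₂0 : v₂ ≠ 0 := norm_ne_zero_iff.mp (by simp [hv₂])
  refine ⟨-⟪p₁ - p₂, v₁⟫ / ‖v₁‖ ^ 2, ⟪p₁ - p₂, v₂⟫ / ‖v₂‖ ^ 2, fun t s hφ hne => ?_⟩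
  by_contra! ⟨h₁, h₂, h₃⟩
  simp only [← lineGap.eq_1] at hφ h₁ h₂ h₃
  have hD : lineGap p₁ v₁ p₂ v₂ t s ≠ 0 := norm_ne_zero_iff.mp hφ
  have hD3 : ‖lineGap p₁ v₁ p₂ v₂ t s‖ ^ 3 ≠ 0 := by positivity
  rw [deriv_deriv_norm_lineGap hD, div_eq_zero_iff, or_iff_left hD3] at h₁
  rw [deriv_fst_deriv_deriv_norm_lineGap hD h₁, div_eq_zero_iff, or_iff_left hD3] at h₂
  rw [deriv_snd_deriv_deriv_norm_lineGap hD h₁, div_eq_zero_iff, or_iff_left hD3] at h₃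
  rcases eq_or_ne (⟪v₁, v₂⟫ ^ 2) (‖v₁‖ ^ 2 * ‖v₂‖ ^ 2) with hpar | hpar
  · exact hdist (range_eq_of_mixedPartialNum_eq_zero hv₁0 hv₂0 hpar hD h₁)
  · exact hne (Prod.ext_iff.mpr (eq_foot_of_mixedPartialNum_eq_zero hv₁0 hv₂0 hpar hD h₁ h₂ h₃))
end
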